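/- arXiv:2409.07499 — 2 statements merged into one kernel-verified Lean document; each statement's English description precedes it below -/
import Mathlib

section
/- The Petersen graph has no proper 3-edge-coloring. -/
/-- The Petersen graph: vertices are the 2-element subsets of a 5-element set, with two
vertices adjacent exactly when the corresponding subsets are disjoint. -/
def PetersenGraph : SimpleGraph {s : Finset (Fin 5) // s.card = 2} where
  Adj a b := Disjoint a.1 b.1
  symm := ⟨fun _ _ h => h.symm⟩
  loopless := ⟨fun a h => by
    try simp only at h
    rw [disjoint_self] at h
    have h2 := a.2
    rw [h] at h2
    simp at h2⟩

/-- A proper 3-edge-coloring of a simple graph `G`: any two distinct edges sharing a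
common vertex receive distinct colors. -/
def ProperEdgeColoring3 {V : Type*} (G : SimpleGraph V) (c : Sym2 V → Fin 3) : Prop :=
  ∀ e ∈ G.edgeSet, ∀ f ∈ G.edgeSet, e ≠ f → (∃ v, v ∈ e ∧ v ∈ f) → c e ≠ c f

/-!
Take a 5-cycle with a third edge, a spoke, at every vertex. In a proper 3-edge-colouring the
spoke at a vertex gets the colour missed by its two cycle edges. Since 5 is odd, the cycle edges
use one colour once and the other two twice each, alternately; so one colour sits on three
consecutive spokes and the other two colours on the remaining two.

The Petersen graph is an outer 5-cycle `{2t, 2t+1}` and an inner 5-cycle `{t+2, t+4}` joined by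
the spokes `{2t, 2t+1} — {2t+2, 2t+4}`. Spokes adjacent along the outer cycle are two steps apart
along the inner one, so the spoke colours cannot follow that pattern along both cycles.
-/

def SpokePattern (x : Fin 5 → Fin 3) : Prop :=
  ∃ j, x j ≠ x (j + 1) ∧ x j ≠ x (j + 2) ∧ x (j + 1) ≠ x (j + 2) ∧
    x (j + 3) = x (j + 2) ∧ x (j + 4) = x (j + 2)

theorem Fin.three_eq_neg_add_of_ne :
    ∀ {p q r : Fin 3}, p ≠ q → p ≠ r → q ≠ r → r = -(p + q) := by
  decide

-- `-(a (i - 1) + a i)` is the colour missing at vertex `i` of a 5-cycle whose edge from `i` to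
-- `i + 1` has colour `a i`.
theorem spokePattern_neg_add (a : Fin 5 → Fin 3) (ha : ∀ i, a i ≠ a (i + 1)) :
    SpokePattern fun i => -(a (i - 1) + a i) := by
  revert a
  unfold SpokePattern
  decide +kernel

theorem not_spokePattern_comp_two_mul {x : Fin 5 → Fin 3} (hx : SpokePattern x) :
    ¬ SpokePattern fun i => x (2 * i) := by
  revert x
  unfold SpokePattern
  decide +kernel

namespace ProperEdgeColoring3

variable {V : Type*} {G : SimpleGraph V} {c : Sym2 V → Fin 3}

theorem color_ne (hc : ProperEdgeColoring3 G c) {v w w' : V} (hw : G.Adj v w)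
    (hw' : G.Adj v w') (hne : w ≠ w') : c s(v, w) ≠ c s(v, w') :=
  hc _ hw _ hw' (fun h => hne (Sym2.congr_right.mp h))
    ⟨v, Sym2.mem_mk_left _ _, Sym2.mem_mk_left _ _⟩

theorem spokePattern (hc : ProperEdgeColoring3 G c) {o s : Fin 5 → V}
    (ho : Function.Injective o) (hos : ∀ i j, o i ≠ s j)
    (hcycle : ∀ i, G.Adj (o i) (o (i + 1))) (hspoke : ∀ i, G.Adj (o i) (s i)) :
    SpokePattern fun i => c s(o i, s i) := by
  set a : Fin 5 → Fin 3 := fun i => c s(o i, o (i + 1))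
  have hprev : ∀ i, G.Adj (o i) (o (i - 1)) := fun i => by
    simpa using (hcycle (i - 1)).symm
  have hcolor_prev : ∀ i, c s(o i, o (i - 1)) = a (i - 1) := fun i => by
    simp only [a, sub_add_cancel, Sym2.eq_swap]
  have hne_prev_next : ∀ i : Fin 5, o (i - 1) ≠ o (i + 1) := fun i =>
    ho.ne (by revert i; decide)
  have ha : ∀ i, a (i - 1) ≠ a i := fun i => by
    rw [← hcolor_prev]
    exact hc.color_ne (hprev i) (hcycle i) (hne_prev_next i)
  have hspoke_color : ∀ i, c s(o i, s i) = -(a (i - 1) + a i) := fun i => by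
    rw [← hcolor_prev]
    exact Fin.three_eq_neg_add_of_ne (hc.color_ne (hprev i) (hcycle i) (hne_prev_next i))
      (hc.color_ne (hprev i) (hspoke i) (hos _ _)) (hc.color_ne (hcycle i) (hspoke i) (hos _ _))
  simp only [hspoke_color]
  exact spokePattern_neg_add a fun i => by simpa using ha (i + 1)

end ProperEdgeColoring3

namespace PetersenGraph

instance : DecidableRel PetersenGraph.Adj := fun a b =>
  inferInstanceAs (Decidable (Disjoint a.1 b.1))

def near (i : Fin 5) : {s : Finset (Fin 5) // s.card = 2} :=
  ⟨{i, i + 1}, Finset.card_pair (by simp)⟩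

def far (i : Fin 5) : {s : Finset (Fin 5) // s.card = 2} :=
  ⟨{i, i + 2}, Finset.card_pair (by simp)⟩

end PetersenGraph

open PetersenGraph in
/-- The Petersen graph has no proper 3-edge-coloring. -/
theorem petersenGraph_no_proper_three_edge_coloring :
    ¬ ∃ c : Sym2 {s : Finset (Fin 5) // s.card = 2} → Fin 3,
        ProperEdgeColoring3 PetersenGraph c := by
  rintro ⟨c, hc⟩
  have outer := hc.spokePattern (o := fun t => near (2 * t)) (s := fun t => far (2 * t + 2))
    (by decide) (by decide) (by decide) (by decide)
  have inner := hc.spokePattern (o := fun t => far (t + 2)) (s := near)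
    (by decide) (by decide) (by decide) (by decide)
  refine not_spokePattern_comp_two_mul inner ?_
  simpa only [Sym2.eq_swap] using outer
end

section
/- Let R be a commutative ring with invertible elements t, v, w and let Q be an R-module, with operations a ⋆ b = t·a + (1−t)·b, a ♯ b = t⁻¹·a + (1−t⁻¹)·b, and virtual operations a ⋆ v = v·a, a ♯ v = v⁻¹·a (similarly for w). Then for every a ∈ Q: [(((a ♯ w) ⋆ v) ⋆ w) ♯ v] ⋆ [(a ♯ w) ⋆ v] = t·a + ((1−t)·v·w⁻¹)·a. Consequently, the defining relation of the double virtual trefoil, namely that this element equals a, is equivalent to (t·(1 − v·w⁻¹) + v·w⁻¹)·a = 0 + a, i.e. the generalized Alexander polynomial of the double virtual trefoil is t(1 − v w⁻¹) + v w⁻¹. -/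
/-!
Along the over-arc of the classical crossing the label `a` is acted on by `w⁻¹`, `v`, `w`, `v⁻¹`
in turn; since the units of `R` commute, these cancel and the over-arc carries `a` again, while the
under-arc carries `(v w⁻¹)·a`. The crossing relation is therefore `a = t·a + (1 − t)·(v w⁻¹)·a`.
-/

theorem inv_smul_smul_smul_inv_smul {G α : Type*} [CommGroup G] [MulAction G α] (v w : G)
    (a : α) : v⁻¹ • w • v • w⁻¹ • a = a := by
  rw [smul_comm v, smul_inv_smul, inv_smul_smul]

/-- In the generalized Alexander quandle with classical operations
`a ⋆ b = t·a + (1−t)·b`, `a ♯ b = t⁻¹·a + (1−t⁻¹)·b` and virtual operations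
`a ⋆ v = v·a`, `a ♯ v = v⁻¹·a` (similarly for `w`), the defining expression of the
double virtual trefoil satisfies
`[(((a ♯ w) ⋆ v) ⋆ w) ♯ v] ⋆ [(a ♯ w) ⋆ v] = t·a + ((1−t)·v·w⁻¹)·a`,
and the relation that this element equals `a` is equivalent to
`(t(1 − v w⁻¹) + v w⁻¹)·a = 0 + a`, so `t(1 − v w⁻¹) + v w⁻¹` is the
generalized Alexander polynomial of the double virtual trefoil. -/
theorem double_virtual_trefoil_alexander {R : Type*} [CommRing R] (t v w : Rˣ)
    {Q : Type*} [AddCommGroup Q] [Module R Q] :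
    let star : Q → Q → Q := fun a b => (t : R) • a + (1 - (t : R)) • b
    let starV : Q → Q := fun a => (v : R) • a
    let sharpV : Q → Q := fun a => ((v⁻¹ : Rˣ) : R) • a
    let starW : Q → Q := fun a => (w : R) • a
    let sharpW : Q → Q := fun a => ((w⁻¹ : Rˣ) : R) • a
    ∀ a : Q,
      star (sharpV (starW (starV (sharpW a)))) (starV (sharpW a)) =
        (t : R) • a + ((1 - (t : R)) * (v : R) * ((w⁻¹ : Rˣ) : R)) • a ∧
      (star (sharpV (starW (starV (sharpW a)))) (starV (sharpW a)) = a ↔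
        ((t : R) * (1 - (v : R) * ((w⁻¹ : Rˣ) : R)) +
          (v : R) * ((w⁻¹ : Rˣ) : R)) • a = 0 + a) := by
  intro star starV sharpV starW sharpW a
  have hoverarc : sharpV (starW (starV (sharpW a))) = a := by
    simpa only [Units.smul_def] using inv_smul_smul_smul_inv_smul v w a
  have hvalue : star (sharpV (starW (starV (sharpW a)))) (starV (sharpW a)) =
      (t : R) • a + ((1 - (t : R)) * (v : R) * ((w⁻¹ : Rˣ) : R)) • a := by
    rw [hoverarc]
    simp only [star, starV, sharpW, smul_smul, mul_assoc]
  have hpolynomial : (t : R) + (1 - (t : R)) * (v : R) * ((w⁻¹ : Rˣ) : R) =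
      (t : R) * (1 - (v : R) * ((w⁻¹ : Rˣ) : R)) + (v : R) * ((w⁻¹ : Rˣ) : R) := by
    ring
  refine ⟨hvalue, ?_⟩
  rw [hvalue, zero_add, ← add_smul, hpolynomial]
end
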